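/- Two graph homomorphisms f, g : G → H are ×-homotopic (belong to the same connected component of the poset Hom(G,H)) if and only if there exist n ≥ 0 and a graph homomorphism F : G × I_n → H with F(x, 0) = f(x) and F(x, n) = g(x) for all vertices x of G. -/

import Mathlib

/-- A graph: a symmetric relation on a vertex type (loops allowed). -/
structure SymGraph (V : Type*) where
  adj : V → V → Prop
  symm : ∀ {x y : V}, adj x y → adj y x

variable {V W U : Type*}

/-- `f` is a graph homomorphism from `G` to `H`. -/
def IsGraphHom (G : SymGraph V) (H : SymGraph W) (f : V → W) : Prop :=
  ∀ {x y : V}, G.adj x y → H.adj (f x) (f y)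

/-- The type of graph homomorphisms. -/
def GHom (G : SymGraph V) (H : SymGraph W) := {f : V → W // IsGraphHom G H f}

def GHom.id (G : SymGraph V) : GHom G G := ⟨fun x => x, fun h => h⟩

def GHom.comp {G : SymGraph V} {H : SymGraph W} {K : SymGraph U}
    (g : GHom H K) (f : GHom G H) : GHom G K :=
  ⟨fun x => g.1 (f.1 x), fun h => g.2 (f.2 h)⟩

/-- `η` is a multi-homomorphism from `G` to `H`. -/
def IsMultiHom (G : SymGraph V) (H : SymGraph W) (η : V → Set W) : Prop :=
  (∀ x, (η x).Nonempty) ∧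
    ∀ {x y}, G.adj x y → ∀ a ∈ η x, ∀ b ∈ η y, H.adj a b

/-- The Hom complex `Hom(G,H)`: the poset of multi-homomorphisms. -/
def MultiHom (G : SymGraph V) (H : SymGraph W) := {η : V → Set W // IsMultiHom G H η}

instance (G : SymGraph V) (H : SymGraph W) : PartialOrder (MultiHom G H) :=
  Subtype.partialOrder _

/-- A graph homomorphism regarded as a multi-homomorphism (pointwise singletons). -/
def GHom.toMulti {G : SymGraph V} {H : SymGraph W} (f : GHom G H) : MultiHom G H :=
  ⟨fun x => {f.1 x}, fun x => ⟨f.1 x, rfl⟩, by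
    intro x y h a ha b hb
    rw [Set.mem_singleton_iff] at ha hb
    subst ha; subst hb
    exact f.2 h⟩

/-- Two homomorphisms are ×-homotopic iff they lie in the same connected
component of the poset `Hom(G,H)`. -/
def XHomotopic {G : SymGraph V} {H : SymGraph W} (f g : GHom G H) : Prop :=
  Relation.ReflTransGen (fun η η' : MultiHom G H => η ≤ η' ∨ η' ≤ η)
    f.toMulti g.toMulti

/-- The categorical product of graphs. -/
def prodGraph (G : SymGraph V) (H : SymGraph W) : SymGraph (V × W) where
  adj p q := G.adj p.1 q.1 ∧ H.adj p.2 q.2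
  symm h := ⟨G.symm h.1, H.symm h.2⟩

/-- The graph `I_n` on vertices `{0,…,n}`, with `x ~ y` iff `|x - y| ≤ 1`
(in particular every vertex is looped). -/
def In (n : ℕ) : SymGraph (Fin (n + 1)) where
  adj i j := |(i : ℤ) - (j : ℤ)| ≤ 1
  symm {i j} h := (abs_sub_comm (j : ℤ) (i : ℤ)).trans_le h

/-! A homotopy `F : G × I_n → H` is a sequence of homomorphisms `F(·,0), …, F(·,n)` in which
consecutive ones `f, g` are adjacent, and adjacent homomorphisms both lie below the
multi-homomorphism `x ↦ {f x, g x}`. Conversely, along a zigzag `f = η₀, η₁, …, ηₖ = g` of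
comparable multi-homomorphisms, pick a homomorphism `cᵢ` inside each `ηᵢ`; comparability of
`ηᵢ` and `ηᵢ₊₁` makes any such `cᵢ` and `cᵢ₊₁` adjacent, so the homotopy is built by appending
them one at a time. -/

namespace In

lemma adj_refl {n : ℕ} (i : Fin (n + 1)) : (In n).adj i i := by
  simp [In]

lemma adj_castSucc_succ {n : ℕ} (i : Fin n) : (In n).adj i.castSucc i.succ := by
  simp [In]

lemma adj_castSucc_castSucc {n : ℕ} {i j : Fin (n + 1)} :
    (In (n + 1)).adj i.castSucc j.castSucc ↔ (In n).adj i j := by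
  simp [In]

lemma eq_last_of_adj_castSucc_last {n : ℕ} {i : Fin (n + 1)}
    (h : (In (n + 1)).adj i.castSucc (Fin.last (n + 1))) : i = Fin.last n := by
  simp only [In, Fin.val_castSucc, Fin.val_last, abs_le] at h
  ext
  simp only [Fin.val_last]
  omega

end In

variable {G : SymGraph V} {H : SymGraph W}

lemma XHomotopic.of_adj {f g : GHom G H} (hfg : ∀ {x y}, G.adj x y → H.adj (f.1 x) (g.1 y)) :
    XHomotopic f g := by
  let μ : MultiHom G H := ⟨fun x => {f.1 x, g.1 x}, fun x => ⟨f.1 x, Or.inl rfl⟩, by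
    rintro x y hxy a (rfl | rfl) b (rfl | rfl)
    · exact f.2 hxy
    · exact hfg hxy
    · exact H.symm (hfg (G.symm hxy))
    · exact g.2 hxy⟩
  have hf : f.toMulti ≤ μ := fun x => by simp [GHom.toMulti, μ]
  have hg : g.toMulti ≤ μ := fun x => by simp [GHom.toMulti, μ]
  exact Relation.ReflTransGen.head (Or.inl hf) (Relation.ReflTransGen.single (Or.inr hg))

lemma XHomotopic.trans {f g h : GHom G H} (hfg : XHomotopic f g) (hgh : XHomotopic g h) :
    XHomotopic f h :=
  Relation.ReflTransGen.trans hfg hgh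

lemma MultiHom.exists_ghom_mem (η : MultiHom G H) : ∃ c : GHom G H, ∀ x, c.1 x ∈ η.1 x := by
  choose c hc using η.2.1
  exact ⟨⟨c, fun hxy => η.2.2 hxy _ (hc _) _ (hc _)⟩, hc⟩

lemma MultiHom.adj_of_comparable {η η' : MultiHom G H} (hη : η ≤ η' ∨ η' ≤ η) {x y : V}
    (hxy : G.adj x y) {a b : W} (ha : a ∈ η.1 x) (hb : b ∈ η'.1 y) : H.adj a b := by
  rcases hη with hle | hle
  · exact η'.2.2 hxy a (hle x ha) b hb
  · exact η.2.2 hxy a ha b (hle y hb)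

namespace GHom

def slice {n : ℕ} (F : GHom (prodGraph G (In n)) H) (i : Fin (n + 1)) : GHom G H :=
  ⟨fun x => F.1 (x, i), fun hxy => F.2 ⟨hxy, In.adj_refl i⟩⟩

lemma xHomotopic_slice_zero {n : ℕ} (F : GHom (prodGraph G (In n)) H) (i : Fin (n + 1)) :
    XHomotopic (F.slice 0) (F.slice i) := by
  induction i using Fin.induction with
  | zero => exact Relation.ReflTransGen.refl
  | succ i ih =>
    exact ih.trans (XHomotopic.of_adj fun hxy => F.2 ⟨hxy, In.adj_castSucc_succ i⟩)

section Snoc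

variable {n : ℕ} (F : GHom (prodGraph G (In n)) H) (c : GHom G H)
  (hc : ∀ {x y}, G.adj x y → H.adj (F.1 (x, Fin.last n)) (c.1 y))

def snoc : GHom (prodGraph G (In (n + 1))) H :=
  ⟨fun p => Fin.lastCases (c.1 p.1) (fun j => F.1 (p.1, j)) p.2, by
    rintro ⟨x, i⟩ ⟨y, j⟩ ⟨hxy, hij⟩
    induction i using Fin.lastCases with
    | last =>
      induction j using Fin.lastCases with
      | last =>
        simp only [Fin.lastCases_last]
        exact c.2 hxy
      | cast j =>
        obtain rfl := In.eq_last_of_adj_castSucc_last ((In _).symm hij)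
        simp only [Fin.lastCases_last, Fin.lastCases_castSucc]
        exact H.symm (hc (G.symm hxy))
    | cast i =>
      induction j using Fin.lastCases with
      | last =>
        obtain rfl := In.eq_last_of_adj_castSucc_last hij
        simp only [Fin.lastCases_last, Fin.lastCases_castSucc]
        exact hc hxy
      | cast j =>
        simp only [Fin.lastCases_castSucc]
        exact F.2 ⟨hxy, In.adj_castSucc_castSucc.1 hij⟩⟩

lemma snoc_castSucc (x : V) (i : Fin (n + 1)) : (F.snoc c hc).1 (x, i.castSucc) = F.1 (x, i) :=
  Fin.lastCases_castSucc (motive := fun _ => W) i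

lemma snoc_last (x : V) : (F.snoc c hc).1 (x, Fin.last (n + 1)) = c.1 x :=
  Fin.lastCases_last (motive := fun _ => W)

end Snoc

end GHom

lemma exists_homotopy_of_reflTransGen {f : GHom G H} {η : MultiHom G H}
    (h : Relation.ReflTransGen (fun η η' : MultiHom G H => η ≤ η' ∨ η' ≤ η) f.toMulti η) :
    ∃ n : ℕ, ∃ F : GHom (prodGraph G (In n)) H,
      (∀ x, F.1 (x, 0) = f.1 x) ∧ ∀ x, F.1 (x, Fin.last n) ∈ η.1 x := by
  induction h with
  | refl => exact ⟨0, ⟨fun p => f.1 p.1, fun h => f.2 h.1⟩, fun _ => rfl, fun _ => rfl⟩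
  | tail _ hη ih =>
    obtain ⟨n, F, h0, hlast⟩ := ih
    obtain ⟨c, hc⟩ := MultiHom.exists_ghom_mem _
    refine ⟨n + 1, F.snoc c fun hxy => MultiHom.adj_of_comparable hη hxy (hlast _) (hc _),
      fun x => (F.snoc_castSucc c _ x 0).trans (h0 x), fun x => F.snoc_last c _ x ▸ hc x⟩

/-- Two graph homomorphisms `f, g : G → H` are ×-homotopic iff there are
`n ≥ 0` and a graph homomorphism `F : G × I_n → H` with `F(x,0) = f(x)` and
`F(x,n) = g(x)` for all vertices `x`. -/
theorem stmt_9 {G : SymGraph V} {H : SymGraph W} (f g : GHom G H) :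
    XHomotopic f g ↔
      ∃ n : ℕ, ∃ F : GHom (prodGraph G (In n)) H,
        ∀ x : V, F.1 (x, 0) = f.1 x ∧ F.1 (x, Fin.last n) = g.1 x := by
  constructor
  · intro h
    obtain ⟨n, F, h0, hlast⟩ := exists_homotopy_of_reflTransGen h
    exact ⟨n, F, fun x => ⟨h0 x, hlast x⟩⟩
  · rintro ⟨n, F, hF⟩
    have h0 : F.slice 0 = f := Subtype.ext (funext fun x => (hF x).1)
    have hn : F.slice (Fin.last n) = g := Subtype.ext (funext fun x => (hF x).2)
    exact h0 ▸ hn ▸ F.xHomotopic_slice_zero (Fin.last n)
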